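/- (Kernel score identity for Laplace smoothing.) Let τ > 0 and let μ be a probability measure on ℝ^D. Define μ_{k_τ}(x) = E_{y∼μ}[exp(−‖x−y‖₂/τ)]. Then: (i) μ_{k_τ} is (1/τ)-Lipschitz on ℝ^D, and hence differentiable Lebesgue-almost everywhere; (ii) at every point x where μ_{k_τ} is differentiable, ∇μ_{k_τ}(x) = E_{y∼μ}[∇_x k_τ(x,y)], where ∇_x k_τ(x,y) = −(1/τ) exp(−‖x−y‖₂/τ)·(x−y)/‖x−y‖₂ for x ≠ y and is set to 0 on the diagonal x = y; and (iii) if moreover μ_{k_τ}(x) > 0, the kernel-induced score satisfies s_{μ,τ}(x) = ∇ log μ_{k_τ}(x) = ∇μ_{k_τ}(x)/μ_{k_τ}(x). -/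

import Mathlib

open MeasureTheory

/-- The Laplace kernel with bandwidth `τ`: `k_τ(x,y) = exp(−‖x−y‖₂/τ)`. -/
noncomputable def laplaceKernel (D : ℕ) (τ : ℝ) (x y : EuclideanSpace ℝ (Fin D)) : ℝ :=
  Real.exp (-‖x - y‖ / τ)

/-- The kernel-smoothed profile `μ_{k_τ}(x) = E_{y∼μ}[exp(−‖x−y‖₂/τ)]`. -/
noncomputable def smoothedProfile {D : ℕ} (τ : ℝ)
    (μ : Measure (EuclideanSpace ℝ (Fin D))) (x : EuclideanSpace ℝ (Fin D)) : ℝ :=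
  ∫ y, laplaceKernel D τ x y ∂μ

/-- The pointwise gradient `∇_x k_τ(x,y)` of the Laplace kernel:
`−(1/τ) exp(−‖x−y‖/τ)(x−y)/‖x−y‖` for `x ≠ y`, set to `0` on the diagonal. -/
noncomputable def laplaceGradKernel (D : ℕ) (τ : ℝ)
    (x y : EuclideanSpace ℝ (Fin D)) : EuclideanSpace ℝ (Fin D) :=
  letI := Classical.dec (x = y)
  if x = y then 0
  else (-(1 / τ) * Real.exp (-‖x - y‖ / τ) / ‖x - y‖) • (x - y)

/-!
The profile is a `μ`-average of the `(1/τ)`-Lipschitz functions `x ↦ k_τ(x, y)`, so it is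
`(1/τ)`-Lipschitz, and Rademacher's theorem gives differentiability almost everywhere.
At a point `x` of differentiability the derivative along `v` is the limit of the central
difference quotients `(f(x + tv) - f(x - tv)) / 2t`. For the kernel these quotients are bounded
by `‖v‖/τ` and tend to `⟪∇ₓk_τ(x, y), v⟫` when `y ≠ x`; for `y = x` they vanish identically
because `k_τ(·, x)` is even about `x`. This matches the convention `∇ₓk_τ(x, x) = 0` even when
`μ` has an atom at `x` (where one-sided quotients would not converge to it), and dominated
convergence gives the gradient formula. The score identity is the chain rule for `log`.
-/

open Filter Topology Set InnerProductSpace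
open scoped NNReal RealInnerProductSpace

theorem Real.lipschitzOnWith_exp_Iic_zero : LipschitzOnWith 1 Real.exp (Iic 0) :=
  (convex_Iic 0).lipschitzOnWith_of_nnnorm_hasDerivWithin_le
    (fun x _ => (Real.hasDerivAt_exp x).hasDerivWithinAt) fun x hx => by
      rw [← NNReal.coe_le_coe, coe_nnnorm, Real.norm_of_nonneg (Real.exp_pos x).le]
      exact Real.exp_le_one_iff.mpr hx

section InnerProductSpace

variable {E : Type*} [NormedAddCommGroup E] [InnerProductSpace ℝ E]

theorem hasFDerivAt_norm {x : E} (hx : x ≠ 0) :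
    HasFDerivAt (‖·‖) (‖x‖⁻¹ • innerSL ℝ x) x := by
  have h := (hasStrictFDerivAt_norm_sq x).hasFDerivAt.sqrt (by positivity)
  simp only [Real.sqrt_sq (norm_nonneg _)] at h
  convert h using 1
  ext v
  simp only [smul_apply, coe_innerSL_apply, smul_eq_mul, nsmul_eq_mul, Nat.cast_ofNat]
  field_simp

theorem gradient.log [CompleteSpace E] {f : E → ℝ} {x : E} (hf : DifferentiableAt ℝ f x)
    (hx : f x ≠ 0) : gradient (fun z => Real.log (f z)) x = (f x)⁻¹ • gradient f x := by
  simp only [gradient, fderiv.log hf hx, map_smul]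

end InnerProductSpace

theorem HasFDerivAt.tendsto_centralDifference {E F : Type*} [NormedAddCommGroup E]
    [NormedSpace ℝ E] [NormedAddCommGroup F] [NormedSpace ℝ F] {f : E → F} {f' : E →L[ℝ] F}
    {x : E} (hf : HasFDerivAt f f' x) (v : E) :
    Tendsto (fun t : ℝ => (2 * t)⁻¹ • (f (x + t • v) - f (x - t • v))) (𝓝[≠] 0) (𝓝 (f' v)) := by
  have hplus : HasDerivAt (fun t : ℝ => x + t • v) v 0 := by
    simpa using ((hasDerivAt_id (0:ℝ)).smul_const v).const_add x
  have hminus : HasDerivAt (fun t : ℝ => x - t • v) (-v) 0 := by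
    simpa using ((hasDerivAt_id (0:ℝ)).smul_const v).const_sub x
  have hdiff : HasDerivAt (fun t : ℝ => f (x + t • v) - f (x - t • v)) ((2:ℝ) • f' v) 0 := by
    have h1 := hf.comp_hasDerivAt_of_eq 0 hplus (by simp)
    have h2 := hf.comp_hasDerivAt_of_eq 0 hminus (by simp)
    exact (h1.sub h2).congr_deriv (by simp [two_smul])
  have hslope := (hasDerivAt_iff_tendsto_slope.mp hdiff).const_smul (2⁻¹ : ℝ)
  rw [smul_smul, inv_mul_cancel₀ two_ne_zero, one_smul] at hslope
  refine hslope.congr fun t => ?_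
  simp [slope_def_module, smul_smul, mul_comm]

section LaplaceKernel

variable {D : ℕ} {τ : ℝ}

theorem laplaceKernel_nonneg (x y : EuclideanSpace ℝ (Fin D)) : 0 ≤ laplaceKernel D τ x y :=
  (Real.exp_pos _).le

theorem laplaceKernel_le_one (hτ : 0 ≤ τ) (x y : EuclideanSpace ℝ (Fin D)) :
    laplaceKernel D τ x y ≤ 1 :=
  Real.exp_le_one_iff.mpr (div_nonpos_of_nonpos_of_nonneg (neg_nonpos.mpr (norm_nonneg _)) hτ)

theorem continuous_laplaceKernel_right (x : EuclideanSpace ℝ (Fin D)) :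
    Continuous (laplaceKernel D τ x) := by
  unfold laplaceKernel
  fun_prop

theorem integrable_laplaceKernel (hτ : 0 ≤ τ) {μ : Measure (EuclideanSpace ℝ (Fin D))}
    [IsFiniteMeasure μ] (x : EuclideanSpace ℝ (Fin D)) : Integrable (laplaceKernel D τ x) μ :=
  .of_bound (continuous_laplaceKernel_right x).aestronglyMeasurable 1 <| ae_of_all _ fun y => by
    rw [Real.norm_of_nonneg (laplaceKernel_nonneg x y)]
    exact laplaceKernel_le_one hτ x y

theorem lipschitzWith_laplaceKernel_left (hτ : 0 < τ) (y : EuclideanSpace ℝ (Fin D)) :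
    LipschitzWith (Real.toNNReal (1 / τ)) (laplaceKernel D τ · y) := by
  have hexponent : LipschitzWith (Real.toNNReal (1 / τ)) fun x => -‖x - y‖ / τ := by
    refine .of_dist_le_mul fun a b => ?_
    rw [Real.coe_toNNReal _ (by positivity), Real.dist_eq, ← sub_div, abs_div, abs_of_pos hτ,
      neg_sub_neg, abs_sub_comm, one_div_mul_eq_div, dist_eq_norm]
    gcongr
    simpa using abs_norm_sub_norm_le (a - y) (b - y)
  have hmaps : MapsTo (fun x => -‖x - y‖ / τ) univ (Iic 0) := fun x _ =>
    div_nonpos_of_nonpos_of_nonneg (neg_nonpos.mpr (norm_nonneg _)) hτ.le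
  have h := Real.lipschitzOnWith_exp_Iic_zero.comp hexponent.lipschitzOnWith hmaps
  rwa [one_mul, lipschitzOnWith_univ] at h

-- The diagonal convention needs no case split: there `‖x - y‖ = 0` and `x - y = 0`.
theorem laplaceGradKernel_eq (x y : EuclideanSpace ℝ (Fin D)) :
    laplaceGradKernel D τ x y = (-(1 / τ) * Real.exp (-‖x - y‖ / τ) / ‖x - y‖) • (x - y) := by
  by_cases hxy : x = y <;> simp [laplaceGradKernel, hxy]

theorem norm_laplaceGradKernel_le (hτ : 0 ≤ τ) (x y : EuclideanSpace ℝ (Fin D)) :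
    ‖laplaceGradKernel D τ x y‖ ≤ 1 / τ := by
  rcases eq_or_ne x y with rfl | hxy
  · simpa [laplaceGradKernel] using hτ
  have hxy' : ‖x - y‖ ≠ 0 := norm_ne_zero_iff.mpr (sub_ne_zero.mpr hxy)
  calc ‖laplaceGradKernel D τ x y‖ = 1 / τ * laplaceKernel D τ x y := by
        rw [laplaceGradKernel_eq, norm_smul, norm_div, norm_mul, norm_neg, norm_norm,
          div_mul_cancel₀ _ hxy', Real.norm_of_nonneg (by positivity),
          Real.norm_of_nonneg (Real.exp_pos _).le, laplaceKernel]
    _ ≤ 1 / τ * 1 := by gcongr; exact laplaceKernel_le_one hτ x y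
    _ = 1 / τ := mul_one _

theorem measurable_laplaceGradKernel (x : EuclideanSpace ℝ (Fin D)) :
    Measurable (laplaceGradKernel D τ x) := by
  simp only [funext (laplaceGradKernel_eq x)]
  fun_prop

theorem integrable_laplaceGradKernel (hτ : 0 ≤ τ) {μ : Measure (EuclideanSpace ℝ (Fin D))}
    [IsFiniteMeasure μ] (x : EuclideanSpace ℝ (Fin D)) :
    Integrable (laplaceGradKernel D τ x) μ :=
  .of_bound (measurable_laplaceGradKernel x).aestronglyMeasurable (1 / τ)
    (ae_of_all _ (norm_laplaceGradKernel_le hτ x))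

theorem hasGradientAt_laplaceKernel_left {x y : EuclideanSpace ℝ (Fin D)} (hxy : x ≠ y) :
    HasGradientAt (laplaceKernel D τ · y) (laplaceGradKernel D τ x y) x := by
  have hdist := (hasFDerivAt_norm (sub_ne_zero.mpr hxy)).comp x ((hasFDerivAt_id x).sub_const y)
  have hprofile : HasDerivAt (fun s => Real.exp (-s / τ)) (Real.exp (-‖x - y‖ / τ) * (-1 / τ))
      ‖x - y‖ :=
    (Real.hasDerivAt_exp _).comp _ ((hasDerivAt_id _).neg.div_const τ)
  have h := hprofile.comp_hasFDerivAt x hdist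
  rw [hasGradientAt_iff_hasFDerivAt]
  refine h.congr_fderiv (ContinuousLinearMap.ext fun v => ?_)
  simp only [laplaceGradKernel, hxy, ↓reduceIte, map_smul, toDual_apply_apply, smul_eq_mul,
    ContinuousLinearMap.comp_id, smul_apply, map_sub, sub_apply, coe_innerSL_apply]
  ring

theorem tendsto_laplaceKernel_centralDifference (x v y : EuclideanSpace ℝ (Fin D)) :
    Tendsto (fun t : ℝ => (2 * t)⁻¹ *
        (laplaceKernel D τ (x + t • v) y - laplaceKernel D τ (x - t • v) y))
      (𝓝[≠] 0) (𝓝 ⟪laplaceGradKernel D τ x y, v⟫) := by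
  rcases eq_or_ne x y with rfl | hxy
  · have hsymm : ∀ t : ℝ, laplaceKernel D τ (x + t • v) x = laplaceKernel D τ (x - t • v) x := by
      simp [laplaceKernel]
    simp [hsymm, laplaceGradKernel]
  · simpa using (hasGradientAt_laplaceKernel_left hxy).hasFDerivAt.tendsto_centralDifference v

theorem abs_laplaceKernel_centralDifference_le (hτ : 0 < τ) (x v y : EuclideanSpace ℝ (Fin D))
    (t : ℝ) :
    |(2 * t)⁻¹ * (laplaceKernel D τ (x + t • v) y - laplaceKernel D τ (x - t • v) y)| ≤
      ‖v‖ / τ := by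
  rcases eq_or_ne t 0 with rfl | ht
  · simp only [mul_zero, inv_zero, zero_mul, abs_zero]
    positivity
  have hlip := (lipschitzWith_laplaceKernel_left hτ y).dist_le_mul (x + t • v) (x - t • v)
  rw [Real.dist_eq, Real.coe_toNNReal _ (by positivity), dist_eq_norm, add_sub_sub_cancel,
    ← two_smul ℝ, smul_smul, norm_smul, Real.norm_eq_abs] at hlip
  rw [abs_mul, abs_inv]
  calc |2 * t|⁻¹ * |laplaceKernel D τ (x + t • v) y - laplaceKernel D τ (x - t • v) y|
      ≤ |2 * t|⁻¹ * (1 / τ * (|2 * t| * ‖v‖)) := by gcongr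
    _ = ‖v‖ / τ := by field_simp

end LaplaceKernel

theorem lipschitzWith_integral {α X E : Type*} [MeasurableSpace α] [PseudoMetricSpace X]
    [NormedAddCommGroup E] [NormedSpace ℝ E] {μ : Measure α} [IsProbabilityMeasure μ]
    {F : X → α → E} {K : ℝ≥0} (hF : ∀ a, LipschitzWith K (F · a))
    (hint : ∀ x, Integrable (F x) μ) : LipschitzWith K fun x => ∫ a, F x a ∂μ := by
  refine .of_dist_le_mul fun x x' => ?_
  rw [dist_eq_norm, ← integral_sub (hint x) (hint x')]
  simpa using norm_integral_le_of_norm_le_const (μ := μ) <| ae_of_all _ fun a => by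
    rw [← dist_eq_norm]
    exact (hF a).dist_le_mul x x'

section SmoothedProfile

variable {D : ℕ} {τ : ℝ} {μ : Measure (EuclideanSpace ℝ (Fin D))}

theorem lipschitzWith_smoothedProfile (hτ : 0 < τ) [IsProbabilityMeasure μ] :
    LipschitzWith (Real.toNNReal (1 / τ)) (smoothedProfile τ μ) :=
  lipschitzWith_integral (lipschitzWith_laplaceKernel_left hτ) (integrable_laplaceKernel hτ.le)

theorem fderiv_smoothedProfile_apply (hτ : 0 < τ) [IsFiniteMeasure μ]
    {x : EuclideanSpace ℝ (Fin D)} (hx : DifferentiableAt ℝ (smoothedProfile τ μ) x)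
    (v : EuclideanSpace ℝ (Fin D)) :
    fderiv ℝ (smoothedProfile τ μ) x v = ∫ y, ⟪laplaceGradKernel D τ x y, v⟫ ∂μ := by
  have hint := integrable_laplaceKernel (μ := μ) hτ.le
  have hdct : Tendsto (fun t : ℝ => ∫ y, (2 * t)⁻¹ *
        (laplaceKernel D τ (x + t • v) y - laplaceKernel D τ (x - t • v) y) ∂μ)
      (𝓝[≠] 0) (𝓝 (∫ y, ⟪laplaceGradKernel D τ x y, v⟫ ∂μ)) :=
    tendsto_integral_filter_of_dominated_convergence (fun _ => ‖v‖ / τ)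
      (.of_forall fun t => (((hint _).sub (hint _)).const_mul _).aestronglyMeasurable)
      (.of_forall fun t => ae_of_all _ fun y => abs_laplaceKernel_centralDifference_le hτ x v y t)
      (integrable_const _) (ae_of_all _ (tendsto_laplaceKernel_centralDifference x v))
  refine tendsto_nhds_unique ((hx.hasFDerivAt.tendsto_centralDifference v).congr fun t => ?_) hdct
  rw [smul_eq_mul, integral_const_mul, integral_sub (hint _) (hint _)]
  rfl

theorem hasGradientAt_smoothedProfile (hτ : 0 < τ) [IsFiniteMeasure μ]
    {x : EuclideanSpace ℝ (Fin D)} (hx : DifferentiableAt ℝ (smoothedProfile τ μ) x) :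
    HasGradientAt (smoothedProfile τ μ) (∫ y, laplaceGradKernel D τ x y ∂μ) x := by
  rw [hasGradientAt_iff_hasFDerivAt]
  refine hx.hasFDerivAt.congr_fderiv (ContinuousLinearMap.ext fun v => ?_)
  rw [fderiv_smoothedProfile_apply hτ hx, toDual_apply_apply, real_inner_comm,
    ← integral_inner (integrable_laplaceGradKernel hτ.le x)]
  simp only [real_inner_comm]

end SmoothedProfile

/-- Kernel score identity for Laplace smoothing.
For `τ > 0` and a probability measure `μ` on `ℝ^D`:
(i) `μ_{k_τ}` is `(1/τ)`-Lipschitz, hence differentiable Lebesgue-a.e.;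
(ii) wherever `μ_{k_τ}` is differentiable, `∇μ_{k_τ}(x) = E_{y∼μ}[∇_x k_τ(x,y)]`;
(iii) if moreover `μ_{k_τ}(x) > 0`, then
`s_{μ,τ}(x) = ∇ log μ_{k_τ}(x) = ∇μ_{k_τ}(x)/μ_{k_τ}(x)`. -/
theorem laplace_smoothing_score_identity {D : ℕ} (τ : ℝ) (hτ : 0 < τ)
    (μ : Measure (EuclideanSpace ℝ (Fin D))) [IsProbabilityMeasure μ] :
    LipschitzWith (Real.toNNReal (1 / τ)) (smoothedProfile τ μ)
    ∧
    (∀ᵐ x : EuclideanSpace ℝ (Fin D), DifferentiableAt ℝ (smoothedProfile τ μ) x)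
    ∧
    (∀ x, DifferentiableAt ℝ (smoothedProfile τ μ) x →
      gradient (smoothedProfile τ μ) x = ∫ y, laplaceGradKernel D τ x y ∂μ)
    ∧
    (∀ x, DifferentiableAt ℝ (smoothedProfile τ μ) x → 0 < smoothedProfile τ μ x →
      gradient (fun z => Real.log (smoothedProfile τ μ z)) x
        = (smoothedProfile τ μ x)⁻¹ • gradient (smoothedProfile τ μ) x) := by
  have hlip := lipschitzWith_smoothedProfile (μ := μ) hτ
  exact ⟨hlip, hlip.ae_differentiableAt,
    fun x hx => (hasGradientAt_smoothedProfile hτ hx).gradient,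
    fun x hx hpos => gradient.log hx hpos.ne'⟩
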